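/- arXiv:1603.04847 — 2 statements merged into one kernel-verified Lean document; each statement's English description precedes it below -/
import Mathlib

section
/- Let h ≤ H < Q be positive integers with Q ≪ x and H = o(x) as x → ∞, and let f, g' : ℕ → ℂ be essentially bounded. Then ∑_{1 ≤ a ≤ H} ∑_{h < q ≤ H} g'(q) ∑_{x < n ≤ x+h, n ≡ a mod q} f(n) = ( ∑_{h < q ≤ H} g'(q)·⌊H/q⌋ + ∑_{h < q ≤ H, {x/q} ≤ {H/q}} g'(q) ) · ∑_{x < n ≤ x+h} f(n) + O_ε(x^ε h²). -/
/-
For `q > h` the window `(x, x + h]` meets each residue class mod `q` at most once, and the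
number of `a ∈ [1, H]` in the class of `n` is `⌊H/q⌋ + [1 ≤ n % q ≤ H % q]`. This agrees with
the weight `⌊H/q⌋ + [x % q ≤ H % q]` of the main term unless the window contains a multiple of
`q` or a number `≡ H + 1 (mod q)`. Such `q` divide `x + j` or `x + j - H - 1` for some
`1 ≤ j ≤ h`, so by the divisor bound there are `O(h x^ε)` of them, and each contributes
`O(h x^ε)`.
-/

open Finset Filter Asymptotics

/-- `f` is essentially bounded: for every `ε > 0`, `f n ≪_ε n^ε`. -/
def EssBdd (f : ℕ → ℂ) : Prop :=
  ∀ ε : ℝ, 0 < ε → ∃ C : ℝ, ∀ n : ℕ, 1 ≤ n → ‖f n‖ ≤ C * (n : ℝ) ^ ε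

theorem Nat.add_sub_one_mod_lt_iff {q : ℕ} (hq : 0 < q) (n m : ℕ) (hm : m < q) :
    (n + (q - 1)) % q < m ↔ 1 ≤ n % q ∧ n % q ≤ m := by
  have hn := Nat.mod_lt n hq
  rw [Nat.add_mod, Nat.mod_eq_of_lt (show q - 1 < q by omega)]
  rcases Nat.eq_zero_or_pos (n % q) with h0 | hpos
  · rw [h0, zero_add, Nat.mod_eq_of_lt (show q - 1 < q by omega)]; omega
  · rw [show n % q + (q - 1) = n % q - 1 + q by omega, Nat.add_mod_right,
      Nat.mod_eq_of_lt (show n % q - 1 < q by omega)]; omega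

theorem Nat.modEq_add_one_iff {q : ℕ} (hq : 0 < q) (n b : ℕ) :
    n ≡ b + 1 [MOD q] ↔ b ≡ n + (q - 1) [MOD q] := by
  have hb : b + 1 + (q - 1) ≡ b [MOD q] := by
    rw [add_assoc, Nat.add_sub_cancel' hq]; exact Nat.add_modEq_right
  constructor
  · exact fun h => ((h.add_right (q - 1)).trans hb).symm
  · exact fun h => Nat.ModEq.add_right_cancel' (q - 1) (h.symm.trans hb.symm)

theorem Nat.card_Icc_filter_modEq {q : ℕ} (hq : 0 < q) (H n : ℕ) :
    #{a ∈ Icc 1 H | n ≡ a [MOD q]} = H / q + if 1 ≤ n % q ∧ n % q ≤ H % q then 1 else 0 := by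
  have hshift : #{a ∈ Icc 1 H | n ≡ a [MOD q]} = H.count (· ≡ n + (q - 1) [MOD q]) := by
    rw [Nat.count_eq_card_filter_range]
    refine card_nbij' (· - 1) (· + 1) ?_ ?_ ?_ ?_ <;> intro a ha <;>
      simp only [coe_filter, mem_Icc, mem_range, Set.mem_ofPred_eq] at ha ⊢
    · obtain ⟨⟨ha1, haH⟩, han⟩ := ha
      obtain ⟨b, rfl⟩ : ∃ b, a = b + 1 := ⟨a - 1, by omega⟩
      exact ⟨by omega, by simpa using (Nat.modEq_add_one_iff hq n b).1 han⟩
    · exact ⟨by omega, (Nat.modEq_add_one_iff hq n a).2 ha.2⟩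
    · omega
    · omega
  simp only [hshift, Nat.count_modEq_card _ hq, Nat.add_sub_one_mod_lt_iff hq _ _ (Nat.mod_lt _ hq)]

theorem sum_Icc_sum_filter_mod_eq {M : Type*} [AddCommMonoid M] {q : ℕ} (hq : 0 < q) (H : ℕ)
    (s : Finset ℕ) (f : ℕ → M) :
    ∑ a ∈ Icc 1 H, ∑ n ∈ s with n % q = a % q, f n
      = ∑ n ∈ s, (H / q + if 1 ≤ n % q ∧ n % q ≤ H % q then 1 else 0) • f n := by
  rw [sum_comm' (t' := s) (s' := fun n => {a ∈ Icc 1 H | n ≡ a [MOD q]})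
    (by simp only [mem_Icc, mem_filter]; tauto)]
  simp only [sum_const, Nat.card_Icc_filter_modEq hq]

theorem Int.fract_div_le_fract_div_iff {q : ℕ} (hq : 0 < q) (x H : ℕ) :
    Int.fract ((x : ℝ) / q) ≤ Int.fract ((H : ℝ) / q) ↔ x % q ≤ H % q := by
  rw [Int.fract_div_natCast_eq_div_natCast_mod, Int.fract_div_natCast_eq_div_natCast_mod,
    div_le_div_iff_of_pos_right (by exact_mod_cast hq)]
  exact Nat.cast_le

/-- The number `⌊H/q⌋ + [1 ≤ n % q ≤ H % q]` of `a ∈ [1, H]` with `a ≡ n (mod q)`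
(`Nat.card_Icc_filter_modEq`) minus the weight `⌊H/q⌋ + [x % q ≤ H % q]` of the main term. -/
def residueDefect (H x q n : ℕ) : ℂ :=
  (if 1 ≤ n % q ∧ n % q ≤ H % q then 1 else 0) - if x % q ≤ H % q then 1 else 0

noncomputable def pinchError (f g' : ℕ → ℂ) (h H x : ℕ) : ℂ :=
  (∑ a ∈ Finset.Icc 1 H, ∑ q ∈ Finset.Ioc h H,
      g' q * ∑ n ∈ (Finset.Ioc x (x + h)).filter (fun n => n % q = a % q), f n)
    - ((∑ q ∈ Finset.Ioc h H, g' q * (H / q : ℕ))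
        + ∑ q ∈ (Finset.Ioc h H).filter
            (fun q : ℕ => Int.fract ((x : ℝ) / (q : ℝ)) ≤ Int.fract ((H : ℝ) / (q : ℝ))), g' q) *
        (∑ n ∈ Finset.Ioc x (x + h), f n)

theorem pinchError_eq (f g' : ℕ → ℂ) (h H x : ℕ) :
    pinchError f g' h H x = ∑ q ∈ Ioc h H, g' q * ∑ n ∈ Ioc x (x + h),
      residueDefect H x q n * f n := by
  have hq : ∀ q ∈ Ioc h H, 0 < q := fun q hq => (Nat.zero_le h).trans_lt (mem_Ioc.1 hq).1
  have hfract :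
      ∑ q ∈ Ioc h H with Int.fract ((x : ℝ) / (q : ℕ)) ≤ Int.fract ((H : ℝ) / (q : ℕ)), g' q
      = ∑ q ∈ Ioc h H, (if x % q ≤ H % q then 1 else 0) * g' q := by
    simp only [sum_filter, ite_mul, one_mul, zero_mul]
    exact sum_congr rfl fun q hq' =>
      if_congr (Int.fract_div_le_fract_div_iff (hq q hq') x H) rfl rfl
  rw [pinchError, sum_comm, hfract, ← sum_add_distrib, sum_mul, ← sum_sub_distrib]
  refine sum_congr rfl fun q hq' => ?_
  rw [← mul_sum, sum_Icc_sum_filter_mod_eq (hq q hq')]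
  push_cast [nsmul_eq_mul]
  simp only [residueDefect, sub_mul, add_mul, sum_sub_distrib, sum_add_distrib, ← mul_sum]
  ring

theorem Nat.mod_pos_and_le_iff_of_no_crossing {q x n H : ℕ} (hxn : x < n) (hnq : n < x + q)
    (hcross : ∀ m ∈ Ioc x n, ¬ q ∣ m ∧ ¬ m ≡ H + 1 [MOD q]) :
    (1 ≤ n % q ∧ n % q ≤ H % q) ↔ x % q ≤ H % q := by
  have hq : 0 < q := by omega
  have hr := Nat.mod_lt x hq
  have hHq := Nat.mod_lt H hq
  have hadd (t : ℕ) (ht : x % q + t < q) : (x + t) % q = x % q + t := by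
    have htq : t % q = t := Nat.mod_eq_of_lt (by omega)
    rw [Nat.add_mod_of_add_mod_lt (by omega), htq]
  have hno_wrap : x % q + (n - x) < q := by
    by_contra! hwrap
    refine (hcross (x + (q - x % q)) (mem_Ioc.2 ⟨by omega, by omega⟩)).1 ?_
    rw [Nat.dvd_iff_mod_eq_zero, Nat.add_mod, Nat.mod_eq_of_lt (show q - x % q < q by omega),
      Nat.add_sub_cancel' hr.le, Nat.mod_self]
  have hn : n % q = x % q + (n - x) := by
    rw [← hadd _ hno_wrap, Nat.add_sub_cancel' hxn.le]
  have hno_pass : ¬ (x % q ≤ H % q ∧ H % q < n % q) := by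
    rintro ⟨hle, hlt⟩
    refine (hcross (x + (H % q + 1 - x % q)) (mem_Ioc.2 ⟨by omega, by omega⟩)).2 ?_
    rw [Nat.ModEq, hadd _ (by omega), Nat.add_mod, Nat.one_mod_eq_one.2 (by omega),
      Nat.mod_eq_of_lt (show H % q + 1 < q by omega)]
    omega
  omega

def crossingModuli (h H x : ℕ) : Finset ℕ :=
  {q ∈ Ioc h H | ∃ n ∈ Ioc x (x + h), q ∣ n ∨ n ≡ H + 1 [MOD q]}

theorem card_crossingModuli_le {h H x : ℕ} (hHx : H < x) {D : ℝ}
    (hD : ∀ m ∈ Ioc 0 (x + h), (#m.divisors : ℝ) ≤ D) :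
    (#(crossingModuli h H x) : ℝ) ≤ 2 * D * h := by
  have hsub : crossingModuli h H x ⊆
      (Ioc x (x + h)).biUnion fun n => n.divisors ∪ (n - (H + 1)).divisors := by
    intro q hq
    obtain ⟨-, n, hn, hdvd⟩ := mem_filter.1 hq
    obtain ⟨hxn, hnh⟩ := mem_Ioc.1 hn
    refine mem_biUnion.2 ⟨n, hn, mem_union.2 ?_⟩
    rcases hdvd with hdvd | hmod
    · exact .inl (Nat.mem_divisors.2 ⟨hdvd, by omega⟩)
    · exact .inr (Nat.mem_divisors.2 ⟨(Nat.modEq_iff_dvd' (by omega)).1 hmod.symm, by omega⟩)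
  calc (#(crossingModuli h H x) : ℝ)
      ≤ ∑ n ∈ Ioc x (x + h), ((#n.divisors : ℝ) + #(n - (H + 1)).divisors) := by
        exact_mod_cast (card_le_card hsub).trans
          (card_biUnion_le.trans (sum_le_sum fun n _ => card_union_le _ _))
    _ ≤ ∑ n ∈ Ioc x (x + h), (D + D) := by
        refine sum_le_sum fun n hn => ?_
        obtain ⟨hxn, hnh⟩ := mem_Ioc.1 hn
        exact add_le_add (hD n (mem_Ioc.2 ⟨by omega, hnh⟩))
          (hD _ (mem_Ioc.2 ⟨by omega, by omega⟩))
    _ = 2 * D * h := by rw [sum_const, Nat.card_Ioc, Nat.add_sub_cancel_left, nsmul_eq_mul]; ring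

theorem residueDefect_eq_zero_of_notMem_crossingModuli {h H x q n : ℕ} (hq : q ∈ Ioc h H)
    (hq' : q ∉ crossingModuli h H x) (hn : n ∈ Ioc x (x + h)) : residueDefect H x q n = 0 := by
  obtain ⟨hxn, hnh⟩ := mem_Ioc.1 hn
  have hcross : ∀ m ∈ Ioc x n, ¬ q ∣ m ∧ ¬ m ≡ H + 1 [MOD q] := fun m hm => by
    simp only [crossingModuli, mem_filter, not_and, not_exists, not_or] at hq'
    exact hq' hq m (mem_Ioc.2 ⟨(mem_Ioc.1 hm).1, (mem_Ioc.1 hm).2.trans hnh⟩)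
  have hnq : n < x + q := by linarith [(mem_Ioc.1 hq).1]
  rw [residueDefect, if_congr (Nat.mod_pos_and_le_iff_of_no_crossing hxn hnq hcross) rfl rfl,
    sub_self]

theorem norm_residueDefect_le_one (H x q n : ℕ) : ‖residueDefect H x q n‖ ≤ 1 := by
  unfold residueDefect
  split_ifs <;> simp

theorem norm_pinchError_le {f g' : ℕ → ℂ} {h H x : ℕ} (hHx : H < x) {F G D : ℝ}
    (hF : ∀ n ∈ Ioc x (x + h), ‖f n‖ ≤ F) (hG : ∀ q ∈ Ioc h H, ‖g' q‖ ≤ G)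
    (hD : ∀ m ∈ Ioc 0 (x + h), (#m.divisors : ℝ) ≤ D) (hF0 : 0 ≤ F) (hG0 : 0 ≤ G) :
    ‖pinchError f g' h H x‖ ≤ 2 * D * G * F * h ^ 2 := by
  have hterm (q : ℕ) : ‖∑ n ∈ Ioc x (x + h), residueDefect H x q n * f n‖ ≤ h * F :=
    calc _ ≤ ∑ n ∈ Ioc x (x + h), F := (norm_sum_le _ _).trans <| sum_le_sum fun n hn => by
            rw [norm_mul]
            exact (mul_le_of_le_one_left (norm_nonneg _) (norm_residueDefect_le_one ..)).trans
              (hF n hn)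
      _ = h * F := by simp
  rw [pinchError_eq, ← sum_subset (filter_subset _ _) fun q hq hq' => by
    rw [sum_eq_zero fun n hn => by
      rw [residueDefect_eq_zero_of_notMem_crossingModuli hq hq' hn, zero_mul], mul_zero]]
  calc _ ≤ ∑ q ∈ crossingModuli h H x, G * (h * F) := by
        refine (norm_sum_le _ _).trans (sum_le_sum fun q hq => ?_)
        rw [norm_mul]
        exact mul_le_mul (hG q (filter_subset _ _ hq)) (hterm q) (norm_nonneg _) hG0
    _ = #(crossingModuli h H x) * (G * (h * F)) := by simp
    _ ≤ 2 * D * h * (G * (h * F)) := by gcongr; exact card_crossingModuli_le hHx hD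
    _ = 2 * D * G * F * h ^ 2 := by ring

theorem add_one_le_mul_rpow {ε p : ℝ} (hε : 0 < ε) (hp : 2 ≤ p) (a : ℕ) :
    (a + 1 : ℝ) ≤ (1 + (ε * Real.log 2)⁻¹) * p ^ (a * ε) := by
  have hlog : 0 < ε * Real.log 2 := mul_pos hε (Real.log_pos one_lt_two)
  have h2p : (2 : ℝ) ^ (a * ε) ≤ p ^ (a * ε) := by gcongr
  have h1 : 1 ≤ (2 : ℝ) ^ (a * ε) := Real.one_le_rpow one_le_two (by positivity)
  have hexp : 1 + a * (ε * Real.log 2) ≤ (2 : ℝ) ^ (a * ε) := by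
    rw [Real.rpow_def_of_pos two_pos]
    linarith [Real.add_one_le_exp (Real.log 2 * (a * ε))]
  have ha : (a : ℝ) ≤ (ε * Real.log 2)⁻¹ * 2 ^ (a * ε) := by
    rw [inv_mul_eq_div, le_div_iff₀ hlog]; linarith
  nlinarith [inv_pos.2 hlog]

theorem add_one_le_rpow {ε p : ℝ} (hp0 : 0 ≤ p) (hp : 2 ≤ p ^ ε) (a : ℕ) :
    (a + 1 : ℝ) ≤ p ^ (a * ε) :=
  calc (a + 1 : ℝ) ≤ 2 ^ a := by exact_mod_cast Nat.lt_two_pow_self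
    _ ≤ (p ^ ε) ^ a := by gcongr
    _ = p ^ (a * ε) := by rw [← Real.rpow_natCast, ← Real.rpow_mul hp0, mul_comm]

theorem Nat.prod_primeFactors_rpow_factorization {n : ℕ} (hn : n ≠ 0) (ε : ℝ) :
    ∏ p ∈ n.primeFactors, (p : ℝ) ^ (n.factorization p * ε) = (n : ℝ) ^ ε := by
  have hpow : ∀ p ∈ n.primeFactors, (p : ℝ) ^ (n.factorization p * ε)
      = ((p ^ n.factorization p : ℕ) : ℝ) ^ ε := fun p _ => by
    rw [Real.rpow_mul (Nat.cast_nonneg p), Real.rpow_natCast, Nat.cast_pow]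
  rw [prod_congr rfl hpow, Real.finsetProd_rpow _ _ fun p _ => by positivity, ← Nat.cast_prod]
  congr 2
  conv_rhs => rw [← Nat.prod_factorization_pow_eq_self hn]
  rfl

theorem essBdd_card_divisors : EssBdd fun n => (#n.divisors : ℂ) := by
  intro ε hε
  set M := 1 + (ε * Real.log 2)⁻¹
  have hM : 1 ≤ M := le_add_of_nonneg_right (inv_nonneg.2 (by positivity))
  set P := ⌈(2 : ℝ) ^ ε⁻¹⌉₊
  have hlocal : ∀ p a : ℕ, p.Prime →
      (a + 1 : ℝ) ≤ M ^ (if p < P then 1 else 0) * (p : ℝ) ^ (a * ε) := by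
    intro p a hp
    split_ifs with hpP
    · rw [pow_one]
      exact add_one_le_mul_rpow hε (by exact_mod_cast hp.two_le) a
    · rw [pow_zero, one_mul]
      refine add_one_le_rpow (Nat.cast_nonneg p) ?_ a
      calc (2 : ℝ) = ((2 : ℝ) ^ ε⁻¹) ^ ε := by
            rw [← Real.rpow_mul zero_le_two, inv_mul_cancel₀ hε.ne', Real.rpow_one]
        _ ≤ (p : ℝ) ^ ε := by
          gcongr; exact (Nat.le_ceil _).trans (by exact_mod_cast not_lt.1 hpP)
  refine ⟨M ^ P, fun n hn => ?_⟩
  have hn0 : n ≠ 0 := Nat.one_le_iff_ne_zero.1 hn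
  rw [Complex.norm_natCast, Nat.card_divisors hn0, Nat.cast_prod]
  calc ∏ p ∈ n.primeFactors, ((n.factorization p + 1 : ℕ) : ℝ)
      ≤ ∏ p ∈ n.primeFactors,
          (M ^ (if p < P then 1 else 0) * (p : ℝ) ^ (n.factorization p * ε)) :=
        prod_le_prod (fun _ _ => by positivity) fun p hp => by
          exact_mod_cast hlocal p _ (Nat.prime_of_mem_primeFactors hp)
    _ = M ^ #{p ∈ n.primeFactors | p < P} * (n : ℝ) ^ ε := by
        rw [prod_mul_distrib, prod_pow_eq_pow_sum, sum_boole, Nat.cast_id,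
          Nat.prod_primeFactors_rpow_factorization hn0]
    _ ≤ M ^ P * (n : ℝ) ^ ε := by
        gcongr
        exact (card_le_card fun p hp => mem_range.2 (mem_filter.1 hp).2).trans (card_range P).le

theorem EssBdd.exists_norm_le {f : ℕ → ℂ} (hf : EssBdd f) {ε : ℝ} (hε : 0 < ε) :
    ∃ C, 0 ≤ C ∧ ∀ n N : ℕ, 1 ≤ n → n ≤ N → ‖f n‖ ≤ C * (N : ℝ) ^ ε := by
  obtain ⟨C, hC⟩ := hf ε hε
  have hC0 : 0 ≤ C := by simpa using (norm_nonneg _).trans (hC 1 le_rfl)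
  exact ⟨C, hC0, fun n N hn hnN => (hC n hn).trans (by gcongr)⟩

theorem norm_pinchError_le_rpow {f g' : ℕ → ℂ} {h H x : ℕ} (hhH : h ≤ H) (hHx : H < x)
    {ε Cf Cg Cd : ℝ} (hε : 0 ≤ ε) (hCf0 : 0 ≤ Cf) (hCg0 : 0 ≤ Cg) (hCd0 : 0 ≤ Cd)
    (hCf : ∀ n N : ℕ, 1 ≤ n → n ≤ N → ‖f n‖ ≤ Cf * (N : ℝ) ^ (ε / 3))
    (hCg : ∀ n N : ℕ, 1 ≤ n → n ≤ N → ‖g' n‖ ≤ Cg * (N : ℝ) ^ (ε / 3))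
    (hCd : ∀ n N : ℕ, 1 ≤ n → n ≤ N → (#n.divisors : ℝ) ≤ Cd * (N : ℝ) ^ (ε / 3)) :
    ‖pinchError f g' h H x‖ ≤ 2 * Cd * Cg * Cf * 2 ^ ε * ((x : ℝ) ^ ε * (h : ℝ) ^ 2) := by
  set N := x + h
  have hN : N ≤ 2 * x := by omega
  have hfN : ∀ n ∈ Ioc x N, ‖f n‖ ≤ Cf * (N : ℝ) ^ (ε / 3) := fun n hn =>
    hCf n N (Nat.one_le_of_lt (mem_Ioc.1 hn).1) (mem_Ioc.1 hn).2
  have hgN : ∀ q ∈ Ioc h H, ‖g' q‖ ≤ Cg * (N : ℝ) ^ (ε / 3) := fun q hq =>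
    hCg q N (Nat.one_le_of_lt (mem_Ioc.1 hq).1) (by have := (mem_Ioc.1 hq).2; omega)
  have hdN : ∀ m ∈ Ioc 0 N, (#m.divisors : ℝ) ≤ Cd * (N : ℝ) ^ (ε / 3) := fun m hm =>
    hCd m N (mem_Ioc.1 hm).1 (mem_Ioc.1 hm).2
  have hcube : ((N : ℝ) ^ (ε / 3)) ^ 3 = (N : ℝ) ^ ε := by
    rw [← Real.rpow_mul_natCast (Nat.cast_nonneg _)]; ring_nf
  calc ‖pinchError f g' h H x‖
      ≤ 2 * (Cd * (N : ℝ) ^ (ε / 3)) * (Cg * (N : ℝ) ^ (ε / 3)) * (Cf * (N : ℝ) ^ (ε / 3))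
          * (h : ℝ) ^ 2 :=
        norm_pinchError_le hHx hfN hgN hdN (by positivity) (by positivity)
    _ = 2 * Cd * Cg * Cf * (N : ℝ) ^ ε * (h : ℝ) ^ 2 := by rw [← hcube]; ring
    _ ≤ 2 * Cd * Cg * Cf * ((2 : ℝ) * x) ^ ε * (h : ℝ) ^ 2 := by gcongr; exact_mod_cast hN
    _ = 2 * Cd * Cg * Cf * 2 ^ ε * ((x : ℝ) ^ ε * (h : ℝ) ^ 2) := by
        rw [Real.mul_rpow zero_le_two (Nat.cast_nonneg _)]; ring

theorem pinch_lemma_first_general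
    (h H x : ℕ → ℕ) (hx : ∀ i, 0 < x i)
    (hhH : ∀ i, h i ≤ H i)
    (hHx : (fun i => (H i : ℝ)) =o[atTop] (fun i => (x i : ℝ)))
    (f g' : ℕ → ℂ) (hf : EssBdd f) (hg' : EssBdd g')
    (ε : ℝ) (hε : 0 < ε) :
    (fun i =>
        (∑ a ∈ Finset.Icc 1 (H i), ∑ q ∈ Finset.Ioc (h i) (H i),
            g' q * ∑ n ∈ (Finset.Ioc (x i) (x i + h i)).filter (fun n => n % q = a % q), f n)
          - ((∑ q ∈ Finset.Ioc (h i) (H i), g' q * (H i / q : ℕ))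
              + ∑ q ∈ (Finset.Ioc (h i) (H i)).filter
                  (fun q : ℕ => Int.fract ((x i : ℝ) / (q : ℝ)) ≤ Int.fract ((H i : ℝ) / (q : ℝ))), g' q) *
              (∑ n ∈ Finset.Ioc (x i) (x i + h i), f n))
      =O[atTop] (fun i => (x i : ℝ) ^ ε * (h i : ℝ) ^ 2) := by
  obtain ⟨Cf, hCf0, hCf⟩ := hf.exists_norm_le (by positivity : 0 < ε / 3)
  obtain ⟨Cg, hCg0, hCg⟩ := hg'.exists_norm_le (by positivity : 0 < ε / 3)
  obtain ⟨Cd, hCd0, hCd⟩ := essBdd_card_divisors.exists_norm_le (by positivity : 0 < ε / 3)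
  refine isBigO_iff.2 ⟨2 * Cd * Cg * Cf * 2 ^ ε, ?_⟩
  filter_upwards [hHx.def one_half_pos] with i hi
  have hHx' : H i < x i := by
    have hx0 : (0 : ℝ) < x i := Nat.cast_pos.2 (hx i)
    simp only [Real.norm_natCast] at hi
    exact_mod_cast (by linarith : (H i : ℝ) < x i)
  rw [Real.norm_of_nonneg (by positivity)]
  exact norm_pinchError_le_rpow (hhH i) hHx' hε.le hCf0 hCg0 hCd0 hCf hCg
    fun m N hm hmN => by simpa using hCd m N hm hmN

/-- First formula of the Pinch Lemma. -/
theorem pinch_lemma_first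
    (h H Q x : ℕ → ℕ) (hh : ∀ i, 0 < h i) (hx : ∀ i, 0 < x i)
    (hhH : ∀ i, h i ≤ H i) (hHQ : ∀ i, H i < Q i)
    (hQx : (fun i => (Q i : ℝ)) =O[atTop] (fun i => (x i : ℝ)))
    (hHx : (fun i => (H i : ℝ)) =o[atTop] (fun i => (x i : ℝ)))
    (f g' : ℕ → ℂ) (hf : EssBdd f) (hg' : EssBdd g')
    (ε : ℝ) (hε : 0 < ε) :
    (fun i =>
        (∑ a ∈ Finset.Icc 1 (H i), ∑ q ∈ Finset.Ioc (h i) (H i),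
            g' q * ∑ n ∈ (Finset.Ioc (x i) (x i + h i)).filter (fun n => n % q = a % q), f n)
          - ((∑ q ∈ Finset.Ioc (h i) (H i), g' q * (H i / q : ℕ))
              + ∑ q ∈ (Finset.Ioc (h i) (H i)).filter
                  (fun q : ℕ => Int.fract ((x i : ℝ) / (q : ℝ)) ≤ Int.fract ((H i : ℝ) / (q : ℝ))), g' q) *
              (∑ n ∈ Finset.Ioc (x i) (x i + h i), f n))
      =O[atTop] (fun i => (x i : ℝ) ^ ε * (h i : ℝ) ^ 2) :=
  pinch_lemma_first_general h H x hx hhH hHx f g' hf hg' ε hε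
end

section
/- Let h, H, x be positive integers with h ≤ H and H = o(x) as x → ∞, and let f, g' : ℕ → ℂ be essentially bounded with g'(q) = 0 for all q ≤ h. Then ∑_{1 ≤ a ≤ H} ∑_{h < q ≤ H} g'(q) ∑_{x < n ≤ x+h, n ≡ a mod q} f(n) = ( ∑_{1 ≤ a ≤ H} ∑_{h < q ≤ H, q | x−a} g'(q) ) · ∑_{x < n ≤ x+h} f(n) + O_ε(x^ε h²). -/
open Finset Filter Asymptotics

/-! Exchanging the order of summation, the error term equals
`∑_{h < q ≤ H} g'(q) ∑_{x < n ≤ x + h} (c_q(n) - c_q(x)) f(n)`, where `c_q(m)` counts the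
`a ∈ [1, H]` with `a ≡ m (mod q)`, i.e. the multiples of `q` in `[m - H, m)`. Sliding this window
from `[x - H, x)` to `[n - H, n)` changes the count only through the multiples of `q` in `[x, n)`
and in `[x - H, n - H)`, two intervals of length at most `h`. Summed over `q`, these are bounded
by `h` times the maximal number of divisors of an integer `≤ 2x`, which is `≪_ε x^ε`; together
with `f, g' ≪_ε x^ε` this gives `x^ε h²`. -/

theorem EssBdd.exists_norm_le_rpow {f : ℕ → ℂ} (hf : EssBdd f) {ε : ℝ} (hε : 0 < ε) :
    ∃ C, 0 ≤ C ∧ ∀ N n : ℕ, 1 ≤ n → n ≤ N → ‖f n‖ ≤ C * (N : ℝ) ^ ε := by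
  obtain ⟨C, hC⟩ := hf ε hε
  have hC0 : 0 ≤ C := by simpa using (norm_nonneg _).trans (hC 1 le_rfl)
  refine ⟨C, hC0, fun N n hn hnN => (hC n hn).trans ?_⟩
  gcongr

section DivisorBound

theorem add_one_le_pow_of_two_le {y : ℝ} (hy : 2 ≤ y) (a : ℕ) : (a + 1 : ℝ) ≤ y ^ a :=
  calc (a + 1 : ℝ) ≤ 2 ^ a := by exact_mod_cast Nat.lt_two_pow_self
    _ ≤ y ^ a := pow_le_pow_left₀ (by norm_num) hy a

theorem add_one_le_mul_pow {y₀ y : ℝ} (hy₀ : 1 < y₀) (hy : y₀ ≤ y) (a : ℕ) :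
    (a + 1 : ℝ) ≤ max 1 (y₀ - 1)⁻¹ * y ^ a := by
  set M := max 1 (y₀ - 1)⁻¹
  have hM : 1 ≤ M := le_max_left _ _
  have hMt : 1 ≤ M * (y₀ - 1) :=
    calc 1 = (y₀ - 1)⁻¹ * (y₀ - 1) := (inv_mul_cancel₀ (by linarith)).symm
      _ ≤ M * (y₀ - 1) := mul_le_mul_of_nonneg_right (le_max_right _ _) (by linarith)
  have bernoulli : 1 + a * (y₀ - 1) ≤ y ^ a :=
    calc 1 + a * (y₀ - 1) ≤ (1 + (y₀ - 1)) ^ a := one_add_mul_le_pow (by linarith) a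
      _ ≤ y ^ a := pow_le_pow_left₀ (by linarith) (by linarith) a
  calc (a + 1 : ℝ) ≤ M * (1 + a * (y₀ - 1)) := by nlinarith [(Nat.cast_nonneg a : (0 : ℝ) ≤ a)]
    _ ≤ M * y ^ a := by gcongr

/-- Only the finitely many primes with `p ^ ε < 2` cost a constant factor. -/
theorem add_one_le_ite_mul_rpow_pow {ε : ℝ} (hε : 0 < ε) {p : ℕ} (hp : p.Prime) (a : ℕ) :
    (a + 1 : ℝ) ≤
      (if (p : ℝ) ^ ε < 2 then max 1 ((2 : ℝ) ^ ε - 1)⁻¹ else 1) * ((p : ℝ) ^ ε) ^ a := by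
  split_ifs with hpε
  · refine add_one_le_mul_pow (Real.one_lt_rpow (by norm_num) hε) ?_ a
    exact Real.rpow_le_rpow (by norm_num) (by exact_mod_cast hp.two_le) hε.le
  · rw [one_mul]
    exact add_one_le_pow_of_two_le (not_lt.mp hpε) a

theorem prod_primeFactors_rpow_pow_factorization {n : ℕ} (hn : n ≠ 0) (ε : ℝ) :
    ∏ p ∈ n.primeFactors, ((p : ℝ) ^ ε) ^ n.factorization p = (n : ℝ) ^ ε := by
  simp_rw [Real.rpow_pow_comm (Nat.cast_nonneg _)]
  rw [Real.finsetProd_rpow _ _ fun p _ => by positivity]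
  congr 1
  conv_rhs => rw [← Nat.prod_factorization_pow_eq_self hn]
  rw [Finsupp.prod, Nat.support_factorization]
  push_cast
  rfl

end DivisorBound

section Counting

theorem sum_sum_filter_eq_sum_card_smul {ι κ M : Type*} [AddCommMonoid M] (s : Finset ι)
    (t : Finset κ) (r : ι → κ → Prop) [∀ i k, Decidable (r i k)] (f : κ → M) :
    ∑ i ∈ s, ∑ k ∈ t with r i k, f k = ∑ k ∈ t, #{i ∈ s | r i k} • f k := by
  simp_rw [sum_filter]
  rw [sum_comm]
  refine sum_congr rfl fun k _ => ?_
  rw [← sum_filter, sum_const]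

theorem card_filter_Ico_add (p : ℕ → Prop) [DecidablePred p] {a b c : ℕ} (hab : a ≤ b)
    (hbc : b ≤ c) : #{m ∈ Ico a c | p m} = #{m ∈ Ico a b | p m} + #{m ∈ Ico b c | p m} := by
  rw [← Ico_union_Ico_eq_Ico hab hbc, filter_union,
    card_union_of_disjoint (disjoint_filter_filter (Ico_disjoint_Ico_consecutive a b c))]

theorem card_Icc_filter_dvd_sub {H m : ℕ} (hHm : H ≤ m) (q : ℕ) :
    #{a ∈ Icc 1 H | q ∣ m - a} = #{b ∈ Ico (m - H) m | q ∣ b} := by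
  refine card_nbij' (m - ·) (m - ·) ?_ ?_ ?_ ?_ <;> intro a ha <;>
    simp only [coe_filter, Set.mem_ofPred_eq, mem_Icc, mem_Ico] at ha ⊢
  · exact ⟨by omega, ha.2⟩
  · exact ⟨by omega, by rw [Nat.sub_sub_self (by omega)]; exact ha.2⟩
  · omega
  · omega

theorem card_Icc_filter_mod_eq {H m : ℕ} (hHm : H ≤ m) (q : ℕ) :
    #{a ∈ Icc 1 H | m % q = a % q} = #{b ∈ Ico (m - H) m | q ∣ b} := by
  rw [← card_Icc_filter_dvd_sub hHm]
  refine congrArg card (filter_congr fun a ha => ?_)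
  rw [eq_comm]
  exact Nat.modEq_iff_dvd' (by grind)

theorem sum_card_filter_dvd_le_sum_card_divisors (Q I : Finset ℕ) (hI : 0 ∉ I) :
    ∑ q ∈ Q, #{m ∈ I | q ∣ m} ≤ ∑ m ∈ I, #m.divisors := by
  refine (sum_card_bipartiteAbove_eq_sum_card_bipartiteBelow (· ∣ ·)).trans_le ?_
  refine sum_le_sum fun m hm => card_le_card fun q hq => ?_
  rw [mem_bipartiteBelow] at hq
  exact Nat.mem_divisors.mpr ⟨hq.2, ne_of_mem_of_not_mem hm hI⟩

end Counting

def congruenceSumError (f g : ℕ → ℂ) (h H x : ℕ) : ℂ :=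
  (∑ a ∈ Icc 1 H, ∑ q ∈ Ioc h H, g q * ∑ n ∈ Ioc x (x + h) with n % q = a % q, f n)
    - (∑ a ∈ Icc 1 H, ∑ q ∈ Ioc h H with q ∣ x - a, g q) * ∑ n ∈ Ioc x (x + h), f n

section CongruenceSumError

variable {f g : ℕ → ℂ} {h H x : ℕ}

theorem congruenceSumError_eq (hHx : H ≤ x) :
    congruenceSumError f g h H x = ∑ q ∈ Ioc h H, g q * ∑ n ∈ Ioc x (x + h),
      ((#{m ∈ Ico x n | q ∣ m} : ℂ) - #{m ∈ Ico (x - H) (n - H) | q ∣ m}) * f n := by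
  have first (q : ℕ) : ∑ a ∈ Icc 1 H, ∑ n ∈ Ioc x (x + h) with n % q = a % q, f n
      = ∑ n ∈ Ioc x (x + h), (#{m ∈ Ico (n - H) n | q ∣ m} : ℂ) * f n := by
    rw [sum_sum_filter_eq_sum_card_smul]
    refine sum_congr rfl fun n hn => ?_
    rw [card_Icc_filter_mod_eq (by grind), nsmul_eq_mul]
  have second : ∑ a ∈ Icc 1 H, ∑ q ∈ Ioc h H with q ∣ x - a, g q
      = ∑ q ∈ Ioc h H, (#{m ∈ Ico (x - H) x | q ∣ m} : ℂ) * g q := by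
    simp_rw [sum_sum_filter_eq_sum_card_smul, card_Icc_filter_dvd_sub hHx, nsmul_eq_mul]
  -- both sides count the multiples of `q` in `[x - H, n)`
  have shift (q : ℕ) {n : ℕ} (hn : n ∈ Ioc x (x + h)) :
      (#{m ∈ Ico (n - H) n | q ∣ m} : ℂ) - #{m ∈ Ico (x - H) x | q ∣ m}
        = #{m ∈ Ico x n | q ∣ m} - #{m ∈ Ico (x - H) (n - H) | q ∣ m} := by
    rw [mem_Ioc] at hn
    have h₁ := card_filter_Ico_add (q ∣ ·) (by omega : x - H ≤ x) hn.1.le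
    have h₂ := card_filter_Ico_add (q ∣ ·) (by omega : x - H ≤ n - H) (Nat.sub_le n H)
    have := congrArg (Nat.cast : ℕ → ℂ) (h₁.symm.trans h₂)
    push_cast at this
    linear_combination -this
  unfold congruenceSumError
  rw [sum_comm]
  simp_rw [← mul_sum, first, second, sum_mul, ← sum_sub_distrib, mul_sum, ← sum_sub_distrib]
  refine sum_congr rfl fun q _ => sum_congr rfl fun n hn => ?_
  rw [← shift q hn]
  ring

theorem sum_card_filter_dvd_Ico_le (Q : Finset ℕ) {a b : ℕ} {D : ℝ} (ha : 0 < a)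
    (hd : ∀ m ∈ Ico a b, (#m.divisors : ℝ) ≤ D) :
    (∑ q ∈ Q, #{m ∈ Ico a b | q ∣ m} : ℝ) ≤ (b - a : ℕ) * D :=
  calc (∑ q ∈ Q, #{m ∈ Ico a b | q ∣ m} : ℝ) ≤ ∑ m ∈ Ico a b, (#m.divisors : ℝ) := by
        exact_mod_cast sum_card_filter_dvd_le_sum_card_divisors Q _ (by simp; omega)
    _ ≤ #(Ico a b) • D := sum_le_card_nsmul _ _ _ hd
    _ = (b - a : ℕ) * D := by rw [nsmul_eq_mul, Nat.card_Ico]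

theorem norm_congruenceSumError_le {A B D : ℝ} (hHx : H < x)
    (hf : ∀ n ∈ Ioc x (x + h), ‖f n‖ ≤ A) (hg : ∀ q ∈ Ioc h H, ‖g q‖ ≤ B)
    (hd : ∀ m, 0 < m → m < x + h → (#m.divisors : ℝ) ≤ D) (hA : 0 ≤ A) (hB : 0 ≤ B)
    (hD : 0 ≤ D) :
    ‖congruenceSumError f g h H x‖ ≤ 2 * A * B * D * h ^ 2 := by
  set N₁ : ℕ → ℕ → ℕ := fun q n => #{m ∈ Ico x n | q ∣ m}
  set N₂ : ℕ → ℕ → ℕ := fun q n => #{m ∈ Ico (x - H) (n - H) | q ∣ m}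
  -- the divisor bound controls the number of moduli `q` that see a change in the count
  have per_n : ∀ n ∈ Ioc x (x + h), ∑ q ∈ Ioc h H, ((N₁ q n : ℝ) + N₂ q n) ≤ 2 * h * D := by
    intro n hn
    rw [mem_Ioc] at hn
    have h₁ := sum_card_filter_dvd_Ico_le (Ioc h H) (b := n) (by omega : 0 < x)
      fun m hm => hd m (by grind) (by grind)
    have h₂ := sum_card_filter_dvd_Ico_le (Ioc h H) (b := n - H) (by omega : 0 < x - H)
      fun m hm => hd m (by grind) (by grind)
    rw [sum_add_distrib]
    have hnx : ((n - x : ℕ) : ℝ) ≤ h := by exact_mod_cast (by omega : n - x ≤ h)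
    rw [show n - H - (x - H) = n - x by omega] at h₂
    nlinarith
  rw [congruenceSumError_eq hHx.le]
  calc ‖∑ q ∈ Ioc h H, g q * ∑ n ∈ Ioc x (x + h), ((N₁ q n : ℂ) - N₂ q n) * f n‖
      ≤ ∑ q ∈ Ioc h H, ‖g q‖ * ∑ n ∈ Ioc x (x + h), ‖(N₁ q n : ℂ) - N₂ q n‖ * ‖f n‖ := by
        refine (norm_sum_le _ _).trans (sum_le_sum fun q _ => ?_)
        rw [norm_mul]
        gcongr
        exact (norm_sum_le _ _).trans_eq (by simp_rw [norm_mul])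
    _ ≤ ∑ q ∈ Ioc h H, B * ∑ n ∈ Ioc x (x + h), ((N₁ q n : ℝ) + N₂ q n) * A := by
        gcongr with q hq n hn
        · exact hg q hq
        · simpa using norm_sub_le (N₁ q n : ℂ) (N₂ q n)
        · exact hf n hn
    _ = A * B * ∑ n ∈ Ioc x (x + h), ∑ q ∈ Ioc h H, ((N₁ q n : ℝ) + N₂ q n) := by
        simp_rw [mul_sum]
        rw [sum_comm]
        exact sum_congr rfl fun n _ => sum_congr rfl fun q _ => by ring
    _ ≤ A * B * ∑ n ∈ Ioc x (x + h), 2 * h * D := by gcongr with n hn; exact per_n n hn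
    _ = 2 * A * B * D * h ^ 2 := by
        rw [sum_const, Nat.card_Ioc, Nat.add_sub_cancel_left, nsmul_eq_mul]
        ring

end CongruenceSumError

theorem corollary_first_part_general
    (h H x : ℕ → ℕ) (hx : ∀ i, 0 < x i)
    (hhH : ∀ i, h i ≤ H i)
    (hHx : (fun i => (H i : ℝ)) =o[atTop] (fun i => (x i : ℝ)))
    (f g' : ℕ → ℂ) (hf : EssBdd f) (hg' : EssBdd g')
    (ε : ℝ) (hε : 0 < ε) :
    (fun i =>
        (∑ a ∈ Finset.Icc 1 (H i), ∑ q ∈ Finset.Ioc (h i) (H i),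
            g' q * ∑ n ∈ (Finset.Ioc (x i) (x i + h i)).filter (fun n => n % q = a % q), f n)
          - (∑ a ∈ Finset.Icc 1 (H i),
                ∑ q ∈ (Finset.Ioc (h i) (H i)).filter (fun q => q ∣ x i - a), g' q) *
              (∑ n ∈ Finset.Ioc (x i) (x i + h i), f n))
      =O[atTop] (fun i => (x i : ℝ) ^ ε * (h i : ℝ) ^ 2) := by
  show (fun i => congruenceSumError f g' (h i) (H i) (x i)) =O[atTop] _
  obtain ⟨Cf, hCf0, hCf⟩ := hf.exists_norm_le_rpow (ε := ε / 3) (by positivity)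
  obtain ⟨Cg, hCg0, hCg⟩ := hg'.exists_norm_le_rpow (ε := ε / 3) (by positivity)
  obtain ⟨Cd, hCd0, hCd⟩ := essBdd_card_divisors.exists_norm_le_rpow (ε := ε / 3) (by positivity)
  have eventually_H_lt_x : ∀ᶠ i in atTop, H i < x i := by
    filter_upwards [hHx.def (c := 1 / 2) (by norm_num)] with i hi
    have : (1 : ℝ) ≤ x i := by exact_mod_cast hx i
    simp only [Real.norm_natCast] at hi
    exact_mod_cast (show (H i : ℝ) < x i by linarith)
  refine isBigO_iff.mpr ⟨2 * Cf * Cg * Cd * 2 ^ ε, ?_⟩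
  filter_upwards [eventually_H_lt_x] with i hi
  have hhx := (hhH i).trans_lt hi
  set N : ℝ := ((2 * x i : ℕ) : ℝ)
  refine (norm_congruenceSumError_le (A := Cf * N ^ (ε / 3)) (B := Cg * N ^ (ε / 3))
    (D := Cd * N ^ (ε / 3)) hi (fun n hn => hCf _ n (by grind) (by grind))
    (fun q hq => hCg _ q (by grind) (by grind))
    (fun m hm₀ hm => by simpa only [Complex.norm_natCast] using hCd (2 * x i) m hm₀ (by omega))
    (by positivity) (by positivity) (by positivity)).trans_eq ?_
  have hN : N ^ (ε / 3) * N ^ (ε / 3) * N ^ (ε / 3) = 2 ^ ε * (x i : ℝ) ^ ε := by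
    have hN₀ : 0 < N := by simpa [N] using hx i
    rw [← Real.rpow_add hN₀, ← Real.rpow_add hN₀, add_thirds]
    push_cast [N]
    exact Real.mul_rpow (by norm_num) (by positivity)
  rw [Real.norm_of_nonneg (by positivity)]
  linear_combination 2 * Cf * Cg * Cd * (h i : ℝ) ^ 2 * hN

/-- First part of the Corollary: no sieve-function hypothesis is needed,
only that `g'` vanishes on `[1, h]`. -/
theorem corollary_first_part
    (h H x : ℕ → ℕ) (hh : ∀ i, 0 < h i) (hx : ∀ i, 0 < x i)
    (hhH : ∀ i, h i ≤ H i)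
    (hHx : (fun i => (H i : ℝ)) =o[atTop] (fun i => (x i : ℝ)))
    (f g' : ℕ → ℂ) (hf : EssBdd f) (hg' : EssBdd g')
    (hvanish : ∀ i, ∀ q ≤ h i, g' q = 0)
    (ε : ℝ) (hε : 0 < ε) :
    (fun i =>
        (∑ a ∈ Finset.Icc 1 (H i), ∑ q ∈ Finset.Ioc (h i) (H i),
            g' q * ∑ n ∈ (Finset.Ioc (x i) (x i + h i)).filter (fun n => n % q = a % q), f n)
          - (∑ a ∈ Finset.Icc 1 (H i),
                ∑ q ∈ (Finset.Ioc (h i) (H i)).filter (fun q => q ∣ x i - a), g' q) *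
              (∑ n ∈ Finset.Ioc (x i) (x i + h i), f n))
      =O[atTop] (fun i => (x i : ℝ) ^ ε * (h i : ℝ) ^ 2) :=
  corollary_first_part_general h H x hx hhH hHx f g' hf hg' ε hε
end
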